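/- Let N and T be integers with 2 ≤ T < N/2. For any sequence of integers 0 ≤ n₁ < n₂ < … < n_T ≤ N, there exists an integer r ≤ 2N/T such that n_{i+1} − n_i = r for at least T(T−1)/(4N) values of i ∈ {1, …, T−1}. -/

import Mathlib

/-!
The gaps `n (i + 1) - n i` are positive and telescope to at most `N`. Put `K = ⌊2N/T⌋`; a gap
larger than `K` exceeds `2N/T`, so fewer than `T/2` gaps do, and at least `(T - 1)/2` gaps take
one of the `K` values `1, …, K`. By pigeonhole one value `r ≤ K` is taken at least
`(T - 1)/(2K) ≥ T(T - 1)/(4N)` times.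
-/

open Finset

lemma sum_range_tsub_le {f : ℕ → ℕ} {m : ℕ} (hf : ∀ i < m, f i ≤ f (i + 1)) :
    ∑ i ∈ range m, (f (i + 1) - f i) ≤ f m := by
  have htelescope : ((∑ i ∈ range m, (f (i + 1) - f i) : ℕ) : ℤ) = f m - f 0 := by
    rw [Nat.cast_sum, ← sum_range_sub (fun i => (f i : ℤ))]
    exact sum_congr rfl fun i hi => Nat.cast_sub (hf i (mem_range.1 hi))
  omega

section

variable {ι : Type*}

lemma card_filter_lt_mul_le_sum (s : Finset ι) (d : ι → ℕ) (K : ℕ) :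
    #{i ∈ s | K < d i} * (K + 1) ≤ ∑ i ∈ s, d i :=
  calc #{i ∈ s | K < d i} * (K + 1) ≤ ∑ i ∈ s with K < d i, d i := by
        simpa using card_nsmul_le_sum _ d (K + 1) fun i hi => (mem_filter.1 hi).2
    _ ≤ ∑ i ∈ s, d i := sum_le_sum_of_subset (filter_subset _ _)

lemma exists_card_le_mul_card_filter_eq (s : Finset ι) (d : ι → ℕ) (K : ℕ)
    (hd : ∀ i ∈ s, d i ∈ Icc 1 K) : ∃ r ≤ K, #s ≤ K * #{i ∈ s | d i = r} := by
  rcases (Icc 1 K).eq_empty_or_nonempty with hempty | hvalues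
  · refine ⟨0, Nat.zero_le _, ?_⟩
    rw [card_eq_zero.2 (eq_empty_of_forall_notMem fun i hi => by simpa [hempty] using hd i hi)]
    exact Nat.zero_le _
  · have hfibres : ∑ _r ∈ Icc 1 K, #s = ∑ r ∈ Icc 1 K, K * #{i ∈ s | d i = r} := by
      rw [← mul_sum, ← card_eq_sum_card_fiberwise hd, sum_const, Nat.card_Icc, smul_eq_mul,
        Nat.add_sub_cancel]
    obtain ⟨r, hr, hle⟩ := exists_le_of_sum_le hvalues hfibres.le
    exact ⟨r, (mem_Icc.1 hr).2, hle⟩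

/-- All but `b` of the terms are at most `K`, since the sum is below `(b + 1)(K + 1)`. -/
lemma exists_card_le_add_mul_card_filter_eq (s : Finset ι) (d : ι → ℕ) {b K : ℕ}
    (hd : ∀ i ∈ s, 0 < d i) (hsum : ∑ i ∈ s, d i < (b + 1) * (K + 1)) :
    ∃ r ≤ K, #s ≤ b + K * #{i ∈ s | d i = r} := by
  have hlarge : #{i ∈ s | K < d i} ≤ b := by
    by_contra! h
    have := card_filter_lt_mul_le_sum s d K
    nlinarith
  obtain ⟨r, hrK, hr⟩ := exists_card_le_mul_card_filter_eq {i ∈ s | ¬K < d i} d K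
    fun i hi => by
      rw [mem_filter] at hi
      exact mem_Icc.2 ⟨hd i hi.1, not_lt.1 hi.2⟩
  have hsub : #{i ∈ {i ∈ s | ¬K < d i} | d i = r} ≤ #{i ∈ s | d i = r} :=
    card_le_card (filter_subset_filter _ (filter_subset _ _))
  have hsplit := card_filter_add_card_filter_not (s := s) (K < d ·)
  refine ⟨r, hrK, ?_⟩
  nlinarith

end

theorem exists_common_gap_general (N T : ℕ) (hT : 2 ≤ T)
    (n : ℕ → ℕ) (hmono : ∀ i j, i < j → j < T → n i < n j)
    (hbound : ∀ i, i < T → n i ≤ N) :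
    ∃ r : ℕ, (r : ℝ) ≤ 2 * N / T ∧
      (T : ℝ) * ((T : ℝ) - 1) / (4 * N) ≤
        (((Finset.range (T - 1)).filter fun i => n (i + 1) - n i = r).card : ℝ) := by
  set K := 2 * N / T
  have hgap : ∀ i < T - 1, n i < n (i + 1) := fun i hi => hmono i (i + 1) (by omega) (by omega)
  have hsum : ∑ i ∈ range (T - 1), (n (i + 1) - n i) ≤ N :=
    (sum_range_tsub_le fun i hi => (hgap i hi).le).trans (hbound _ (by omega))
  have h2N : 2 * N < T * (K + 1) := Nat.lt_mul_div_succ _ (by omega)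
  have hhalf : T ≤ 2 * ((T - 1) / 2 + 1) := by omega
  obtain ⟨r, hrK, hr⟩ := exists_card_le_add_mul_card_filter_eq (range (T - 1))
    (fun i => n (i + 1) - n i) (b := (T - 1) / 2) (K := K)
    (fun i hi => Nat.sub_pos_of_lt (hgap i (mem_range.1 hi))) (by nlinarith)
  rw [card_range] at hr
  set c := #{i ∈ range (T - 1) | n (i + 1) - n i = r}
  have hKT : K * T ≤ 2 * N := Nat.div_mul_le_self _ _
  have hcount : T * (T - 1) ≤ c * (4 * N) :=
    calc T * (T - 1) ≤ T * (2 * (K * c)) := Nat.mul_le_mul_left _ (by omega)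
      _ = 2 * (K * T) * c := by ring
      _ ≤ 2 * (2 * N) * c := by gcongr
      _ = c * (4 * N) := by ring
  refine ⟨r, (Nat.cast_le.2 hrK).trans (by exact_mod_cast Nat.cast_div_le),
    div_le_of_le_mul₀ (by positivity) (by positivity) ?_⟩
  calc (T : ℝ) * (T - 1) = ((T * (T - 1) : ℕ) : ℝ) := by
        push_cast [Nat.cast_sub (by omega : 1 ≤ T)]; ring
    _ ≤ c * (4 * N) := by exact_mod_cast hcount

/-- Let `2 ≤ T < N/2`.  For any strictly increasing sequence
`0 ≤ n₀ < n₁ < ⋯ < n_{T-1} ≤ N` of integers there exists `r ≤ 2N/T` such that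
`n_{i+1} − n_i = r` for at least `T(T−1)/(4N)` values of `i`. -/
theorem exists_common_gap (N T : ℕ) (hT : 2 ≤ T) (hTN : 2 * T < N)
    (n : ℕ → ℕ) (hmono : ∀ i j, i < j → j < T → n i < n j)
    (hbound : ∀ i, i < T → n i ≤ N) :
    ∃ r : ℕ, (r : ℝ) ≤ 2 * N / T ∧
      (T : ℝ) * ((T : ℝ) - 1) / (4 * N) ≤
        (((Finset.range (T - 1)).filter fun i => n (i + 1) - n i = r).card : ℝ) :=
  exists_common_gap_general N T hT n hmono hbound
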